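/- Let m₀ ∈ L^∞(Ω) with ∫_Ω m₀ dx > 0 and |{m₀ < 0}| > 0, and let γ ∈ (0,|Ω|) satisfy ∫_γ^{|Ω|} m₀* ds = 0. Then there exists a measurable set E ⊂ Ω with |E| = γ such that the truncated weight m̄₀ = m₀·χ_E has decreasing rearrangement m̄₀*(s) = m₀*(s) for 0 < s < γ and m̄₀*(s) = 0 for γ ≤ s < |Ω|; in particular m̄₀ ≺ m₀. -/

import Mathlib

open MeasureTheory Set Filter Topology
open scoped ENNReal

noncomputable section

/-- Distribution function `d_f(t) = |{x ∈ Ω : f x > t}|`. -/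
def distrib {N : ℕ} (Ω : Set (Fin N → ℝ)) (f : (Fin N → ℝ) → ℝ) (t : ℝ) : ℝ≥0∞ :=
  volume {x ∈ Ω | t < f x}

/-- Equimeasurability of two functions on `Ω`. -/
def EquiMeas {N : ℕ} (Ω : Set (Fin N → ℝ)) (f g : (Fin N → ℝ) → ℝ) : Prop :=
  ∀ t : ℝ, distrib Ω f t = distrib Ω g t

/-- Decreasing rearrangement `f*(s) = sup {t : d_f(t) > s}`. -/
def decRearr {N : ℕ} (Ω : Set (Fin N → ℝ)) (f : (Fin N → ℝ) → ℝ) (s : ℝ) : ℝ :=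
  sSup {t : ℝ | ENNReal.ofReal s < distrib Ω f t}

/-- Hardy–Littlewood–Pólya order `g ≺ f`. -/
def Prec {N : ℕ} (Ω : Set (Fin N → ℝ)) (g f : (Fin N → ℝ) → ℝ) : Prop :=
  (∀ t ∈ Icc (0 : ℝ) (volume Ω).toReal,
      ∫ s in Ioo (0 : ℝ) t, decRearr Ω g s ≤ ∫ s in Ioo (0 : ℝ) t, decRearr Ω f s) ∧
  ∫ s in Ioo (0 : ℝ) (volume Ω).toReal, decRearr Ω g s
    = ∫ s in Ioo (0 : ℝ) (volume Ω).toReal, decRearr Ω f s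

/-!
Let `t₀ = m₀*(γ)`. The rearrangement `m₀*` is nonincreasing, has zero integral over `(γ, |Ω|)`
and is negative near `|Ω|` because `{m₀ < 0}` has positive measure; hence `t₀ > 0`. The quantile
`t₀` satisfies `|{m₀ > t₀}| ≤ γ ≤ |{m₀ ≥ t₀}|`, and Lebesgue measure restricted to the level set
`{m₀ = t₀}` takes every intermediate value (cut it by hyperplanes `x i = c`), so some `E` with
`{m₀ > t₀} ⊆ E ⊆ {m₀ ≥ t₀}` has `|E| = γ`. Above `t₀` the truncation `m₀ χ_E` has the superlevel
sets of `m₀`, between `0` and `t₀` its superlevel set is `E`, and below `0` it is `Ω`; this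
identifies its rearrangement. The majorization then reduces to `∫_γ^T m₀* ≥ 0` for
`γ ≤ T ≤ |Ω|`, which holds for a nonincreasing function with zero integral over `(γ, |Ω|)`.
-/

section IntervalIntegrals

variable {φ ψ : ℝ → ℝ} {a b c γ V T : ℝ}

theorem setIntegral_Ioo_add_setIntegral_Ioo (hab : a ≤ b) (hbc : b ≤ c)
    (h₁ : IntegrableOn φ (Ioo a b)) (h₂ : IntegrableOn φ (Ioo b c)) :
    (∫ x in Ioo a b, φ x) + ∫ x in Ioo b c, φ x = ∫ x in Ioo a c, φ x := by
  simp only [← integral_Ioc_eq_integral_Ioo]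
  rw [← setIntegral_union (Ioc_disjoint_Ioc_of_le le_rfl) measurableSet_Ioc
    ((integrableOn_Ioc_iff_integrableOn_Ioo).2 h₁) ((integrableOn_Ioc_iff_integrableOn_Ioo).2 h₂),
    Ioc_union_Ioc_eq_Ioc hab hbc]

theorem AntitoneOn.pos_of_setIntegral_Ioo_eq_zero (hab : a < b) (hφ : AntitoneOn φ (Ico a b))
    (hint : IntegrableOn φ (Ioo a b)) (h0 : ∫ x in Ioo a b, φ x = 0) (hc : c < b)
    (hneg : ∀ x ∈ Ioo c b, φ x < 0) : 0 < φ a := by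
  by_contra! ha
  have hnonneg : 0 ≤ᵐ[volume.restrict (Ioo a b)] fun x => -φ x :=
    ae_restrict_of_forall_mem measurableSet_Ioo fun x hx =>
      neg_nonneg.2 ((hφ ⟨le_rfl, hab⟩ (Ioo_subset_Ico_self hx) hx.1.le).trans ha)
  have hsupp : Ioo (max a c) b ⊆ (Function.support fun x => -φ x) ∩ Ioo a b := fun x hx =>
    ⟨neg_ne_zero.2 (hneg x ⟨(le_max_right a c).trans_lt hx.1, hx.2⟩).ne,
      (le_max_left a c).trans_lt hx.1, hx.2⟩
  have hpos := (setIntegral_pos_iff_support_of_nonneg_ae hnonneg hint.neg).2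
    (((Measure.measure_Ioo_pos _).2 (max_lt hab hc)).trans_le (measure_mono hsupp))
  rw [integral_neg, h0, neg_zero] at hpos
  exact hpos.false

theorem AntitoneOn.setIntegral_Ioo_nonneg_of_eq_zero (hφ : AntitoneOn φ (Ioo a b))
    (hint : IntegrableOn φ (Ioo a b)) (h0 : ∫ x in Ioo a b, φ x = 0) (hT : T ∈ Icc a b) :
    0 ≤ ∫ x in Ioo a T, φ x := by
  rcases hT.2.eq_or_lt with rfl | hTb
  · exact h0.ge
  rcases hT.1.eq_or_lt with rfl | haT
  · simp
  have hT' : T ∈ Ioo a b := ⟨haT, hTb⟩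
  rcases le_or_gt 0 (φ T) with hφT | hφT
  · exact setIntegral_nonneg measurableSet_Ioo fun x hx =>
      hφT.trans (hφ ⟨hx.1, hx.2.trans hTb⟩ hT' hx.2.le)
  · have htail : ∫ x in Ioo T b, φ x ≤ 0 := setIntegral_nonpos measurableSet_Ioo fun x hx =>
      (hφ hT' ⟨haT.trans hx.1, hx.2⟩ hx.1.le).trans hφT.le
    have hsplit := setIntegral_Ioo_add_setIntegral_Ioo hT.1 hT.2
      (hint.mono_set (Ioo_subset_Ioo_right hT.2)) (hint.mono_set (Ioo_subset_Ioo_left hT.1))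
    linarith

theorem setIntegral_Ioo_truncation_add (hφ : IntegrableOn φ (Ioo 0 V))
    (hψ_lt : EqOn ψ φ (Ioo 0 γ)) (hψ_ge : EqOn ψ 0 (Ico γ V)) (hγ : 0 ≤ γ) (hT : T ∈ Icc γ V) :
    (∫ x in Ioo 0 T, ψ x) + ∫ x in Ioo γ T, φ x = ∫ x in Ioo 0 T, φ x := by
  have hφ₁ : IntegrableOn φ (Ioo 0 γ) := hφ.mono_set (Ioo_subset_Ioo_right (hT.1.trans hT.2))
  have hφ₂ : IntegrableOn φ (Ioo γ T) := hφ.mono_set (Ioo_subset_Ioo hγ hT.2)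
  have hψ₂ : EqOn ψ 0 (Ioo γ T) :=
    hψ_ge.mono (Ioo_subset_Ico_self.trans (Ico_subset_Ico_right hT.2))
  rw [← setIntegral_Ioo_add_setIntegral_Ioo hγ hT.1 (hφ₁.congr_fun hψ_lt.symm measurableSet_Ioo)
      (integrableOn_zero.congr_fun hψ₂.symm measurableSet_Ioo),
    ← setIntegral_Ioo_add_setIntegral_Ioo hγ hT.1 hφ₁ hφ₂,
    setIntegral_congr_fun measurableSet_Ioo hψ_lt, setIntegral_congr_fun measurableSet_Ioo hψ₂]
  simp

theorem setIntegral_Ioo_truncation_le (hφ : IntegrableOn φ (Ioo 0 V))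
    (hψ_lt : EqOn ψ φ (Ioo 0 γ)) (hψ_ge : EqOn ψ 0 (Ico γ V)) (hφ_anti : AntitoneOn φ (Ioo γ V))
    (h0 : ∫ x in Ioo γ V, φ x = 0) (hγ : 0 ≤ γ) (hT : T ∈ Icc 0 V) :
    ∫ x in Ioo 0 T, ψ x ≤ ∫ x in Ioo 0 T, φ x := by
  rcases le_total T γ with hTγ | hγT
  · exact (setIntegral_congr_fun measurableSet_Ioo (hψ_lt.mono (Ioo_subset_Ioo_right hTγ))).le
  · rw [← setIntegral_Ioo_truncation_add hφ hψ_lt hψ_ge hγ ⟨hγT, hT.2⟩]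
    exact le_add_of_nonneg_right (hφ_anti.setIntegral_Ioo_nonneg_of_eq_zero
      (hφ.mono_set (Ioo_subset_Ioo_left hγ)) h0 ⟨hγT, hT.2⟩)

end IntervalIntegrals

section Quantile

variable {α : Type*} [MeasurableSpace α] {μ : Measure α} {Ω : Set α} {f : α → ℝ} {r : ℝ≥0∞}

theorem measure_sSup_lt_le (hS : BddAbove {t | r < μ {x ∈ Ω | t < f x}}) :
    μ {x ∈ Ω | sSup {t | r < μ {x ∈ Ω | t < f x}} < f x} ≤ r := by
  set c := sSup {t | r < μ {x ∈ Ω | t < f x}}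
  obtain ⟨u, hu_anti, hu_gt, hu⟩ := exists_seq_strictAnti_tendsto c
  have hunion : {x ∈ Ω | c < f x} = ⋃ n, {x ∈ Ω | u n < f x} := by
    ext x
    simp only [mem_ofPred_eq, mem_iUnion]
    refine ⟨fun ⟨hx, hcx⟩ => ?_, fun ⟨n, hx, hux⟩ => ⟨hx, (hu_gt n).trans hux⟩⟩
    obtain ⟨n, hn⟩ := (hu.eventually (gt_mem_nhds hcx)).exists
    exact ⟨n, hx, hn⟩
  have hlim : Tendsto (fun n => μ {x ∈ Ω | u n < f x}) atTop (𝓝 (μ {x ∈ Ω | c < f x})) := by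
    rw [hunion]
    exact tendsto_measure_iUnion_atTop fun m n hmn x hx =>
      ⟨hx.1, (hu_anti.antitone hmn).trans_lt hx.2⟩
  by_contra! h
  obtain ⟨n, hn⟩ := (hlim.eventually (lt_mem_nhds h)).exists
  exact (hu_gt n).not_ge (le_csSup hS hn)

theorem le_measure_sSup_le (hΩ : MeasurableSet Ω) (hf : Measurable f) (hΩ_fin : μ Ω ≠ ∞)
    (hS : {t | r < μ {x ∈ Ω | t < f x}}.Nonempty) :
    r ≤ μ {x ∈ Ω | sSup {t | r < μ {x ∈ Ω | t < f x}} ≤ f x} := by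
  set c := sSup {t | r < μ {x ∈ Ω | t < f x}}
  obtain ⟨u, hu_mono, hu_lt, hu⟩ := exists_seq_strictMono_tendsto c
  have hinter : {x ∈ Ω | c ≤ f x} = ⋂ n, {x ∈ Ω | u n < f x} := by
    ext x
    simp only [mem_ofPred_eq, mem_iInter]
    refine ⟨fun ⟨hx, hcx⟩ n => ⟨hx, (hu_lt n).trans_le hcx⟩, fun h => ⟨(h 0).1, ?_⟩⟩
    exact le_of_tendsto' hu fun n => (h n).2.le
  have hlim : Tendsto (fun n => μ {x ∈ Ω | u n < f x}) atTop (𝓝 (μ {x ∈ Ω | c ≤ f x})) := by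
    rw [hinter]
    refine tendsto_measure_iInter_atTop
      (fun n => (hΩ.inter (measurableSet_lt measurable_const hf)).nullMeasurableSet)
      (fun m n hmn x hx => ⟨hx.1, (hu_mono.monotone hmn).trans_lt hx.2⟩)
      ⟨0, ne_top_of_le_ne_top hΩ_fin (measure_mono (sep_subset _ _))⟩
  refine ge_of_tendsto' hlim fun n => ?_
  obtain ⟨t, ht, hut⟩ := exists_lt_of_lt_csSup hS (hu_lt n)
  exact ht.le.trans (measure_mono fun x hx => ⟨hx.1, hut.trans hx.2⟩)

variable {φ : α → ℝ}

theorem exists_subset_measure_eq (hφ : Measurable φ) (hφ_level : ∀ c, μ {x | φ x = c} = 0)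
    {L : Set α} (hL : MeasurableSet L) (hL_fin : μ L ≠ ∞) (hr : r ≤ μ L) :
    ∃ F ⊆ L, MeasurableSet F ∧ μ F = r := by
  rcases eq_or_ne r 0 with rfl | hr0
  · exact ⟨∅, empty_subset _, MeasurableSet.empty, measure_empty⟩
  rcases hr.eq_or_lt with rfl | hrL
  · exact ⟨L, subset_rfl, hL, rfl⟩
  set S := {t | r < μ {x ∈ L | t < φ x}}
  have hmeas : ∀ t, MeasurableSet {x ∈ L | t < φ x} := fun t =>
    hL.inter (measurableSet_lt measurable_const hφ)
  have hanti : Antitone fun t => {x ∈ L | t < φ x} := fun s t hst x hx => ⟨hx.1, hst.trans_lt hx.2⟩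
  have hS : S.Nonempty := by
    have hlim := tendsto_measure_iUnion_atBot (μ := μ) hanti
    have hunion : ⋃ t, {x ∈ L | t < φ x} = L := by
      ext x
      simp only [mem_iUnion, mem_ofPred_eq]
      exact ⟨fun ⟨_, hx, _⟩ => hx, fun hx => ⟨φ x - 1, hx, sub_one_lt _⟩⟩
    rw [hunion] at hlim
    exact (hlim.eventually (lt_mem_nhds hrL)).exists
  have hS_bdd : BddAbove S := by
    have hlim := tendsto_measure_iInter_atTop (fun t => (hmeas t).nullMeasurableSet) hanti
      ⟨0, ne_top_of_le_ne_top hL_fin (measure_mono (sep_subset _ _))⟩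
    have hinter : ⋂ t, {x ∈ L | t < φ x} = ∅ := by
      ext x
      simp only [mem_iInter, mem_ofPred_eq, mem_empty_iff_false, iff_false, not_forall]
      exact ⟨φ x, fun h => lt_irrefl _ h.2⟩
    rw [hinter, measure_empty] at hlim
    obtain ⟨t₁, ht₁⟩ := (hlim.eventually (gt_mem_nhds (pos_iff_ne_zero.2 hr0))).exists
    refine ⟨t₁, fun t ht => ?_⟩
    by_contra! h
    exact (ht.trans_le (measure_mono (hanti h.le))).not_gt ht₁
  -- `sSup S` is a quantile of `φ` on `L`; its two bounds agree because `{φ = sSup S}` is null.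
  refine ⟨_, sep_subset _ _, hmeas (sSup S), le_antisymm (measure_sSup_lt_le hS_bdd) ?_⟩
  calc r ≤ μ {x ∈ L | sSup S ≤ φ x} := le_measure_sSup_le hL hφ hL_fin hS
    _ ≤ μ ({x ∈ L | sSup S < φ x} ∪ {x | φ x = sSup S}) :=
        measure_mono fun x ⟨hx, hle⟩ => hle.lt_or_eq.imp (fun h => ⟨hx, h⟩) Eq.symm
    _ ≤ μ {x ∈ L | sSup S < φ x} := by
        simpa [hφ_level] using measure_union_le (μ := μ) {x ∈ L | sSup S < φ x} {x | φ x = sSup S}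

theorem exists_measurableSet_sep_lt_subset_subset_sep_le (hφ : Measurable φ)
    (hφ_level : ∀ c, μ {x | φ x = c} = 0) (hΩ : MeasurableSet Ω) (hf : Measurable f)
    (hΩ_fin : μ Ω ≠ ∞) {t : ℝ} (hlt : μ {x ∈ Ω | t < f x} ≤ r) (hle : r ≤ μ {x ∈ Ω | t ≤ f x}) :
    ∃ E, MeasurableSet E ∧ {x ∈ Ω | t < f x} ⊆ E ∧ E ⊆ {x ∈ Ω | t ≤ f x} ∧ μ E = r := by
  set A := {x ∈ Ω | t < f x}
  set L := {x ∈ Ω | f x = t}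
  have hA : MeasurableSet A := hΩ.inter (measurableSet_lt measurable_const hf)
  have hL : MeasurableSet L := hΩ.inter (hf (measurableSet_singleton t))
  have hAL : Disjoint A L := disjoint_left.2 fun x hA hL => hA.2.ne' hL.2
  have hle' : r - μ A ≤ μ L := by
    rw [tsub_le_iff_left, ← measure_union hAL hL]
    refine hle.trans (measure_mono fun x ⟨hx, htx⟩ => ?_)
    exact htx.lt_or_eq.imp (fun h => ⟨hx, h⟩) fun h => ⟨hx, h.symm⟩
  obtain ⟨F, hFL, hF, hμF⟩ := exists_subset_measure_eq hφ hφ_level hL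
    (ne_top_of_le_ne_top hΩ_fin (measure_mono (sep_subset _ _))) hle'
  refine ⟨A ∪ F, hA.union hF, subset_union_left, union_subset (fun x hx => ⟨hx.1, hx.2.le⟩)
    fun x hx => ⟨(hFL hx).1, (hFL hx).2.ge⟩, ?_⟩
  rw [measure_union (hAL.mono_right hFL) hF, hμF, add_tsub_cancel_of_le hlt]

end Quantile

section Rearrangement

variable {N : ℕ} {Ω : Set (Fin N → ℝ)} {f : (Fin N → ℝ) → ℝ} {s t C γ : ℝ}

theorem distrib_antitone : Antitone (distrib Ω f) :=
  fun _ _ hst => measure_mono fun _ hx => ⟨hx.1, hst.trans_lt hx.2⟩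

theorem mem_upperBounds_of_distrib_le (h : distrib Ω f t ≤ ENNReal.ofReal s) :
    t ∈ upperBounds {t' | ENNReal.ofReal s < distrib Ω f t'} := by
  intro t' ht'
  by_contra! htt'
  exact (ht'.trans_le ((distrib_antitone htt'.le).trans h)).false

theorem decRearr_le_of_distrib_le (hS : {t' | ENNReal.ofReal s < distrib Ω f t'}.Nonempty)
    (h : distrib Ω f t ≤ ENNReal.ofReal s) : decRearr Ω f s ≤ t :=
  csSup_le hS (mem_upperBounds_of_distrib_le h)

theorem lt_distrib_of_lt_decRearr (hS : {t' | ENNReal.ofReal s < distrib Ω f t'}.Nonempty)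
    (h : t < decRearr Ω f s) : ENNReal.ofReal s < distrib Ω f t := by
  obtain ⟨t', ht', htt'⟩ := exists_lt_of_lt_csSup hS h
  exact ht'.trans_le (distrib_antitone htt'.le)

theorem decRearr_lt_of_volume_lt (hΩ : MeasurableSet Ω) (hf : Measurable f)
    (hΩ_fin : volume Ω ≠ ∞) (hS : {t' | ENNReal.ofReal s < distrib Ω f t'}.Nonempty)
    (h : volume {x ∈ Ω | t ≤ f x} < ENNReal.ofReal s) : decRearr Ω f s < t := by
  by_contra! ht
  refine ((le_measure_sSup_le hΩ hf hΩ_fin hS).trans (measure_mono ?_)).not_gt h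
  exact fun x hx => ⟨hx.1, ht.trans hx.2⟩

theorem ofReal_lt_of_mem_Ico_toReal {a : ℝ≥0∞} (hs : s ∈ Ico 0 a.toReal) : ENNReal.ofReal s < a :=
  ((ENNReal.ofReal_lt_ofReal_iff (hs.1.trans_lt hs.2)).2 hs.2).trans_le ENNReal.ofReal_toReal_le

theorem distrib_eq_zero_of_le (hΩ : MeasurableSet Ω) (hb : ∀ᵐ x ∂volume.restrict Ω, |f x| ≤ C)
    (ht : C ≤ t) : distrib Ω f t = 0 := by
  refine measure_mono_null (fun x hx => ?_) (ae_iff.1 ((ae_restrict_iff' hΩ).1 hb))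
  exact fun hC => (ht.trans_lt hx.2).not_ge ((le_abs_self _).trans (hC hx.1))

theorem distrib_eq_volume_of_lt (hΩ : MeasurableSet Ω)
    (hb : ∀ᵐ x ∂volume.restrict Ω, |f x| ≤ C) (ht : t < -C) : distrib Ω f t = volume Ω := by
  refine (measure_mono (sep_subset _ _)).antisymm (measure_mono_ae ?_)
  filter_upwards [(ae_restrict_iff' hΩ).1 hb] with x hC hx
  exact ⟨hx, ht.trans_le (neg_le_of_abs_le (hC hx))⟩

theorem bddAbove_distrib_gt (hΩ : MeasurableSet Ω) (hb : ∀ᵐ x ∂volume.restrict Ω, |f x| ≤ C) :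
    BddAbove {t | ENNReal.ofReal s < distrib Ω f t} :=
  ⟨C, mem_upperBounds_of_distrib_le ((distrib_eq_zero_of_le hΩ hb le_rfl).trans_le bot_le)⟩

theorem nonempty_distrib_gt (hΩ : MeasurableSet Ω) (hb : ∀ᵐ x ∂volume.restrict Ω, |f x| ≤ C)
    (hs : s ∈ Ico 0 (volume Ω).toReal) : {t | ENNReal.ofReal s < distrib Ω f t}.Nonempty :=
  ⟨-C - 1, by
    rw [mem_ofPred_eq, distrib_eq_volume_of_lt hΩ hb (by linarith)]
    exact ofReal_lt_of_mem_Ico_toReal hs⟩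

theorem decRearr_antitoneOn (hΩ : MeasurableSet Ω) (hb : ∀ᵐ x ∂volume.restrict Ω, |f x| ≤ C) :
    AntitoneOn (decRearr Ω f) (Ico 0 (volume Ω).toReal) := fun _ _ _ hs' hss' =>
  csSup_le_csSup (bddAbove_distrib_gt hΩ hb) (nonempty_distrib_gt hΩ hb hs')
    fun _ ht => (ENNReal.ofReal_le_ofReal hss').trans_lt ht

theorem abs_decRearr_le (hΩ : MeasurableSet Ω) (hb : ∀ᵐ x ∂volume.restrict Ω, |f x| ≤ C)
    (hs : s ∈ Ico 0 (volume Ω).toReal) : |decRearr Ω f s| ≤ C := by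
  refine abs_le.2 ⟨le_of_forall_lt_imp_le_of_dense fun t ht => ?_, ?_⟩
  · refine le_csSup (bddAbove_distrib_gt hΩ hb) ?_
    rw [mem_ofPred_eq, distrib_eq_volume_of_lt hΩ hb ht]
    exact ofReal_lt_of_mem_Ico_toReal hs
  · exact decRearr_le_of_distrib_le (nonempty_distrib_gt hΩ hb hs)
      ((distrib_eq_zero_of_le hΩ hb le_rfl).trans_le bot_le)

theorem integrableOn_decRearr (hΩ : MeasurableSet Ω) (hb : ∀ᵐ x ∂volume.restrict Ω, |f x| ≤ C) :
    IntegrableOn (decRearr Ω f) (Ioo 0 (volume Ω).toReal) := by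
  refine ⟨(aemeasurable_restrict_of_antitoneOn measurableSet_Ioo
    ((decRearr_antitoneOn hΩ hb).mono Ioo_subset_Ico_self)).aestronglyMeasurable,
    .restrict_of_bounded C measure_Ioo_lt_top ?_⟩
  exact ae_restrict_of_forall_mem measurableSet_Ioo fun s hs =>
    abs_decRearr_le hΩ hb (Ioo_subset_Ico_self hs)

theorem decRearr_pos_of_setIntegral_Ioo_eq_zero (hΩ : MeasurableSet Ω) (hf : Measurable f)
    (hb : ∀ᵐ x ∂volume.restrict Ω, |f x| ≤ C) (hneg : 0 < volume {x ∈ Ω | f x < 0})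
    (hγ : γ ∈ Ioo 0 (volume Ω).toReal)
    (hγ0 : ∫ s in Ioo γ (volume Ω).toReal, decRearr Ω f s = 0) : 0 < decRearr Ω f γ := by
  have hΩ_fin : volume Ω ≠ ∞ := (ENNReal.toReal_pos_iff.1 (hγ.1.trans hγ.2)).2.ne
  set P := {x ∈ Ω | 0 ≤ f x}
  have hP : volume P < volume Ω := by
    have hP_eq : P = Ω \ {x ∈ Ω | f x < 0} := by
      ext x
      simp [P, not_lt]
    have hN : MeasurableSet {x ∈ Ω | f x < 0} := hΩ.inter (measurableSet_lt hf measurable_const)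
    rw [hP_eq, measure_sdiff (sep_subset _ _) hN.nullMeasurableSet
      (ne_top_of_le_ne_top hΩ_fin (measure_mono (sep_subset _ _)))]
    exact ENNReal.sub_lt_self hΩ_fin (hneg.trans_le (measure_mono (sep_subset _ _))).ne' hneg.ne'
  -- The rearrangement is negative on `(|P|, |Ω|)`, an interval of positive length.
  refine AntitoneOn.pos_of_setIntegral_Ioo_eq_zero hγ.2
    ((decRearr_antitoneOn hΩ hb).mono (Ico_subset_Ico_left hγ.1.le))
    ((integrableOn_decRearr hΩ hb).mono_set (Ioo_subset_Ioo_left hγ.1.le)) hγ0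
    ((ENNReal.toReal_lt_toReal hP.ne_top hΩ_fin).2 hP) fun s hs => ?_
  have hs₀ : 0 < s := ENNReal.toReal_nonneg.trans_lt hs.1
  refine decRearr_lt_of_volume_lt hΩ hf hΩ_fin (nonempty_distrib_gt hΩ hb ⟨hs₀.le, hs.2⟩) ?_
  rw [← ENNReal.ofReal_toReal hP.ne_top]
  exact (ENNReal.ofReal_lt_ofReal_iff hs₀).2 hs.1

end Rearrangement

section Indicator

variable {N : ℕ} {Ω E : Set (Fin N → ℝ)} {f : (Fin N → ℝ) → ℝ} {s t t₀ γ : ℝ}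

theorem distrib_indicator_eq_of_le (hE : {x ∈ Ω | t₀ < f x} ⊆ E) (ht₀ : 0 ≤ t₀) (ht : t₀ ≤ t) :
    distrib Ω (E.indicator f) t = distrib Ω f t := by
  refine congr_arg volume (ext fun x => ⟨fun ⟨hx, hxt⟩ => ⟨hx, ?_⟩, fun ⟨hx, hxt⟩ => ⟨hx, ?_⟩⟩)
  · by_cases hxE : x ∈ E
    · rwa [indicator_of_mem hxE] at hxt
    · rw [indicator_of_notMem hxE] at hxt
      linarith
  · rwa [indicator_of_mem (hE ⟨hx, ht.trans_lt hxt⟩)]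

theorem volume_le_distrib_indicator (hE : E ⊆ {x ∈ Ω | t₀ ≤ f x}) (ht : t < t₀) :
    volume E ≤ distrib Ω (E.indicator f) t :=
  measure_mono fun x hx => ⟨(hE hx).1, by rw [indicator_of_mem hx]; exact ht.trans_le (hE hx).2⟩

theorem distrib_indicator_le_volume (ht : 0 ≤ t) : distrib Ω (E.indicator f) t ≤ volume E :=
  measure_mono fun x ⟨_, hxt⟩ => by
    by_contra hxE
    rw [indicator_of_notMem hxE] at hxt
    exact hxt.not_ge ht

theorem distrib_indicator_of_neg (hE : ∀ x ∈ E, 0 ≤ f x) (ht : t < 0) :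
    distrib Ω (E.indicator f) t = volume Ω :=
  congr_arg volume (sep_eq_self_iff_mem_true.2 fun x _ => ht.trans_le (indicator_nonneg hE x))

theorem decRearr_indicator_of_lt (hS : {t | ENNReal.ofReal γ < distrib Ω f t}.Nonempty)
    (hE_lt : {x ∈ Ω | decRearr Ω f γ < f x} ⊆ E) (hE_le : E ⊆ {x ∈ Ω | decRearr Ω f γ ≤ f x})
    (hE : volume E = ENNReal.ofReal γ) (ht₀ : 0 ≤ decRearr Ω f γ) (hγ : 0 < γ)
    (hs : s ∈ Ioo 0 γ) : decRearr Ω (E.indicator f) s = decRearr Ω f s := by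
  have hsγ : ENNReal.ofReal s < ENNReal.ofReal γ := (ENNReal.ofReal_lt_ofReal_iff hγ).2 hs.2
  refine congr_arg sSup (ext fun t => ?_)
  rcases lt_or_ge t (decRearr Ω f γ) with ht | ht
  · exact iff_of_true (hsγ.trans_le (hE ▸ volume_le_distrib_indicator hE_le ht))
      (hsγ.trans (lt_distrib_of_lt_decRearr hS ht))
  · rw [mem_ofPred_eq, mem_ofPred_eq, distrib_indicator_eq_of_le hE_lt ht₀ ht]

theorem decRearr_indicator_of_ge (hE_le : E ⊆ {x ∈ Ω | t₀ ≤ f x}) (ht₀ : 0 ≤ t₀)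
    (hE : volume E = ENNReal.ofReal γ) (hγ : 0 ≤ γ) (hs : s ∈ Ico γ (volume Ω).toReal) :
    decRearr Ω (E.indicator f) s = 0 := by
  have hneg : ∀ t < 0, ENNReal.ofReal s < distrib Ω (E.indicator f) t := fun t ht => by
    rw [distrib_indicator_of_neg (fun x hx => ht₀.trans (hE_le hx).2) ht]
    exact ofReal_lt_of_mem_Ico_toReal ⟨hγ.trans hs.1, hs.2⟩
  have hzero : distrib Ω (E.indicator f) 0 ≤ ENNReal.ofReal s :=
    (distrib_indicator_le_volume le_rfl).trans (hE ▸ ENNReal.ofReal_le_ofReal hs.1)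
  refine le_antisymm (decRearr_le_of_distrib_le ⟨-1, hneg _ neg_one_lt_zero⟩ hzero)
    (le_of_forall_lt_imp_le_of_dense fun t ht => ?_)
  exact le_csSup ⟨0, mem_upperBounds_of_distrib_le hzero⟩ (hneg t ht)

end Indicator

theorem exists_truncated_weight_general
    (N : ℕ) (Ω : Set (Fin N → ℝ)) (hΩo : IsOpen Ω)
    (m₀ : (Fin N → ℝ) → ℝ) (hm₀ : Measurable m₀)
    (hm₀b : ∃ C : ℝ, ∀ᵐ x ∂(volume.restrict Ω), |m₀ x| ≤ C)
    (hm₀int : 0 < ∫ x in Ω, m₀ x)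
    (hm₀neg : 0 < volume {x ∈ Ω | m₀ x < 0})
    (γ : ℝ) (hγ : γ ∈ Ioo (0 : ℝ) (volume Ω).toReal)
    (hγ0 : ∫ s in Ioo γ (volume Ω).toReal, decRearr Ω m₀ s = 0) :
    ∃ E : Set (Fin N → ℝ), MeasurableSet E ∧ E ⊆ Ω ∧ volume E = ENNReal.ofReal γ ∧
      (∀ s ∈ Ioo (0 : ℝ) γ, decRearr Ω (E.indicator m₀) s = decRearr Ω m₀ s) ∧
      (∀ s ∈ Ico γ (volume Ω).toReal, decRearr Ω (E.indicator m₀) s = 0) ∧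
      Prec Ω (E.indicator m₀) m₀ := by
  rcases isEmpty_or_nonempty (Fin N) with hN | ⟨⟨i⟩⟩
  · -- No coordinate to slice level sets with, but then `Ω` is a single point where `m₀ < 0`.
    obtain ⟨x₀, -, hx₀⟩ := nonempty_of_measure_ne_zero hm₀neg.ne'
    refine absurd hm₀int (integral_nonpos fun x => ?_).not_gt
    rw [Subsingleton.elim x x₀]
    exact hx₀.le
  have hΩ := hΩo.measurableSet
  obtain ⟨C, hb⟩ := hm₀b
  have hΩ_fin : volume Ω ≠ ∞ := (ENNReal.toReal_pos_iff.1 (hγ.1.trans hγ.2)).2.ne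
  have hS := nonempty_distrib_gt hΩ hb ⟨hγ.1.le, hγ.2⟩
  have ht₀ := decRearr_pos_of_setIntegral_Ioo_eq_zero hΩ hm₀ hb hm₀neg hγ hγ0
  obtain ⟨E, hE, hE_lt, hE_le, hE_vol⟩ :=
    exists_measurableSet_sep_lt_subset_subset_sep_le (t := decRearr Ω m₀ γ)
      (measurable_pi_apply i) (Measure.pi_hyperplane (fun _ : Fin N => (volume : Measure ℝ)) i)
      hΩ hm₀ hΩ_fin
      (measure_sSup_lt_le (bddAbove_distrib_gt hΩ hb)) (le_measure_sSup_le hΩ hm₀ hΩ_fin hS)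
  have h_lt : EqOn (decRearr Ω (E.indicator m₀)) (decRearr Ω m₀) (Ioo 0 γ) := fun s hs =>
    decRearr_indicator_of_lt hS hE_lt hE_le hE_vol ht₀.le hγ.1 hs
  have h_ge : EqOn (decRearr Ω (E.indicator m₀)) 0 (Ico γ (volume Ω).toReal) := fun s hs =>
    decRearr_indicator_of_ge hE_le ht₀.le hE_vol hγ.1.le hs
  have h_int := integrableOn_decRearr hΩ hb
  refine ⟨E, hE, hE_le.trans (sep_subset _ _), hE_vol, h_lt, h_ge, fun T hT => ?_, ?_⟩
  · exact setIntegral_Ioo_truncation_le h_int h_lt h_ge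
      ((decRearr_antitoneOn hΩ hb).mono (Ioo_subset_Ico_self.trans (Ico_subset_Ico_left hγ.1.le)))
      hγ0 hγ.1.le hT
  · rw [← setIntegral_Ioo_truncation_add h_int h_lt h_ge hγ.1.le ⟨hγ.2.le, le_rfl⟩, hγ0, add_zero]

theorem exists_truncated_weight
    (N : ℕ) (Ω : Set (Fin N → ℝ)) (hΩo : IsOpen Ω) (hΩb : Bornology.IsBounded Ω)
    (m₀ : (Fin N → ℝ) → ℝ) (hm₀ : Measurable m₀)
    (hm₀b : ∃ C : ℝ, ∀ᵐ x ∂(volume.restrict Ω), |m₀ x| ≤ C)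
    (hm₀int : 0 < ∫ x in Ω, m₀ x)
    (hm₀neg : 0 < volume {x ∈ Ω | m₀ x < 0})
    (γ : ℝ) (hγ : γ ∈ Ioo (0 : ℝ) (volume Ω).toReal)
    (hγ0 : ∫ s in Ioo γ (volume Ω).toReal, decRearr Ω m₀ s = 0) :
    ∃ E : Set (Fin N → ℝ), MeasurableSet E ∧ E ⊆ Ω ∧ volume E = ENNReal.ofReal γ ∧
      (∀ s ∈ Ioo (0 : ℝ) γ, decRearr Ω (E.indicator m₀) s = decRearr Ω m₀ s) ∧
      (∀ s ∈ Ico γ (volume Ω).toReal, decRearr Ω (E.indicator m₀) s = 0) ∧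
      Prec Ω (E.indicator m₀) m₀ :=
  exists_truncated_weight_general N Ω hΩo m₀ hm₀ hm₀b hm₀int hm₀neg γ hγ hγ0
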